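/- Let R(θ,t) be μ-strongly convex in θ with time-varying minimizer θ*(t) that is L-Lipschitz in t. Consider gradient descent iterates θ̂_{(k+1)h} = θ̂_{kh} − η∇_θR(θ̂_{kh}, kh) with time step h > 0 and learning rate 0 < η < 1/M, where the operator norm of I − η∇_{θθ}R(θ,t) is bounded by 1 − ηM for all θ,t. Then limsup_{k→∞} ‖θ̂_{kh} − θ*(kh)‖ ≤ Lh/(ηM). -/

import Mathlib

/-!
The tracking error `e k = ‖θ̂ₖ - θ*(kh)‖` obeys `e (k+1) ≤ (1 - ηM) e k + Lh`: since `θ*(kh)` is a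
fixed point of the gradient step at time `kh`, the contraction bound moves `θ̂ₖ` to within
`(1 - ηM) e k` of `θ*(kh)`, and the minimiser drifts by at most `Lh` before the next step. A linear
recursion `e (k+1) ≤ q e k + c` with `0 ≤ q < 1` has all limit points below its fixed point
`c / (1 - q)`, which here is `Lh / (ηM)`.
-/

open Filter

section LinearRecursion

variable {e : ℕ → ℝ} {q c : ℝ}

theorem sub_le_pow_mul_of_le_mul_add (hq : 0 ≤ q) (hq1 : q ≠ 1)
    (he : ∀ k, e (k + 1) ≤ q * e k + c) (k : ℕ) :
    e k - c / (1 - q) ≤ q ^ k * (e 0 - c / (1 - q)) := by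
  have hfix : q * (c / (1 - q)) + c = c / (1 - q) := by
    field_simp [sub_ne_zero.mpr hq1.symm]
    ring
  induction k with
  | zero => simp
  | succ k ih =>
    calc e (k + 1) - c / (1 - q) ≤ q * (e k - c / (1 - q)) := by linarith [he k]
      _ ≤ q * (q ^ k * (e 0 - c / (1 - q))) := mul_le_mul_of_nonneg_left ih hq
      _ = q ^ (k + 1) * (e 0 - c / (1 - q)) := by ring

theorem limsup_le_div_one_sub_of_le_mul_add (hbdd : IsBoundedUnder (· ≥ ·) atTop e)
    (hq : 0 ≤ q) (hq1 : q < 1) (he : ∀ k, e (k + 1) ≤ q * e k + c) :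
    limsup e atTop ≤ c / (1 - q) := by
  set B := c / (1 - q)
  have hlim : Tendsto (fun k => q ^ k * (e 0 - B) + B) atTop (nhds B) := by
    simpa using ((tendsto_pow_atTop_nhds_zero_of_lt_one hq hq1).mul_const (e 0 - B)).add_const B
  calc limsup e atTop ≤ limsup (fun k => q ^ k * (e 0 - B) + B) atTop :=
        limsup_le_limsup
          (Eventually.of_forall fun k => by linarith [sub_le_pow_mul_of_le_mul_add hq hq1.ne he k])
          hbdd.isCoboundedUnder_le hlim.isBoundedUnder_le
    _ = B := hlim.limsup_eq

end LinearRecursion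

theorem stmt_0_general {d : ℕ}
    (gradR : EuclideanSpace ℝ (Fin d) → ℝ → EuclideanSpace ℝ (Fin d))
    (θstar : ℝ → EuclideanSpace ℝ (Fin d))
    (h η M L : ℝ) (hh : 0 < h) (hη : 0 < η) (hM : 0 < M) (hηM : η < 1 / M)
    -- θ*(t) is the minimizer: first-order optimality
    (hopt : ∀ t : ℝ, 0 ≤ t → gradR (θstar t) t = 0)
    -- θ* is L-Lipschitz in t
    (hLip : ∀ s t : ℝ, ‖θstar t - θstar s‖ ≤ L * |t - s|)
    -- operator-norm bound ‖I - η ∇θθ R‖ ≤ 1 - ηM, stated via the mean-value consequence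
    (hcontr : ∀ x y : EuclideanSpace ℝ (Fin d), ∀ t : ℝ, 0 ≤ t →
      ‖(x - η • gradR x t) - (y - η • gradR y t)‖ ≤ (1 - η * M) * ‖x - y‖)
    (θhat : ℕ → EuclideanSpace ℝ (Fin d))
    (hupd : ∀ k : ℕ, θhat (k + 1) = θhat k - η • gradR (θhat k) (k * h)) :
    limsup (fun k : ℕ => ‖θhat k - θstar (k * h)‖) atTop ≤ L * h / (η * M) := by
  have hηM_le : η * M ≤ 1 := by linarith [(lt_div_iff₀ hM).mp hηM]
  have hstep : ∀ k : ℕ, ‖θhat (k + 1) - θstar ((k + 1 : ℕ) * h)‖ ≤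
      (1 - η * M) * ‖θhat k - θstar (k * h)‖ + L * h := by
    intro k
    have ht : 0 ≤ (k : ℝ) * h := by positivity
    have hdrift : ‖θstar (k * h) - θstar ((k + 1 : ℕ) * h)‖ ≤ L * h := by
      have hgap : |(k : ℝ) * h - (k + 1 : ℕ) * h| = h := by
        rw [Nat.cast_succ, ← sub_mul, sub_add_cancel_left, neg_one_mul, abs_neg, abs_of_pos hh]
      simpa only [hgap] using hLip ((k + 1 : ℕ) * h) (k * h)
    calc ‖θhat (k + 1) - θstar ((k + 1 : ℕ) * h)‖
        = ‖((θhat k - η • gradR (θhat k) (k * h)) -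
            (θstar (k * h) - η • gradR (θstar (k * h)) (k * h))) +
          (θstar (k * h) - θstar ((k + 1 : ℕ) * h))‖ := by
          rw [hupd, hopt _ ht, smul_zero, sub_zero, sub_add_sub_cancel]
      _ ≤ (1 - η * M) * ‖θhat k - θstar (k * h)‖ + L * h :=
          norm_add_le_of_le (hcontr _ _ _ ht) hdrift
  simpa using limsup_le_div_one_sub_of_le_mul_add (isBoundedUnder_of ⟨0, fun k => norm_nonneg _⟩)
    (sub_nonneg.mpr hηM_le) (sub_lt_self 1 (by positivity)) hstep

/-- Gradient descent for time-varying optimization: ATE upper bound. -/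
theorem stmt_0 {d : ℕ}
    (R : EuclideanSpace ℝ (Fin d) → ℝ → ℝ)
    (gradR : EuclideanSpace ℝ (Fin d) → ℝ → EuclideanSpace ℝ (Fin d))
    (θstar : ℝ → EuclideanSpace ℝ (Fin d))
    (h η M L μ : ℝ) (hh : 0 < h) (hη : 0 < η) (hM : 0 < M) (hηM : η < 1 / M)
    (hμ : 0 < μ)
    -- μ-strong convexity of R in θ
    (hconv : ∀ θ₁ θ₂ : EuclideanSpace ℝ (Fin d), ∀ t : ℝ, 0 ≤ t →
      R θ₂ t ≥ R θ₁ t + inner ℝ (gradR θ₁ t) (θ₂ - θ₁) + μ / 2 * ‖θ₂ - θ₁‖ ^ 2)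
    -- θ*(t) is the minimizer: first-order optimality
    (hopt : ∀ t : ℝ, 0 ≤ t → gradR (θstar t) t = 0)
    -- θ* is L-Lipschitz in t
    (hLip : ∀ s t : ℝ, ‖θstar t - θstar s‖ ≤ L * |t - s|)
    -- operator-norm bound ‖I - η ∇θθ R‖ ≤ 1 - ηM, stated via the mean-value consequence
    (hcontr : ∀ x y : EuclideanSpace ℝ (Fin d), ∀ t : ℝ, 0 ≤ t →
      ‖(x - η • gradR x t) - (y - η • gradR y t)‖ ≤ (1 - η * M) * ‖x - y‖)
    (θhat : ℕ → EuclideanSpace ℝ (Fin d))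
    (hupd : ∀ k : ℕ, θhat (k + 1) = θhat k - η • gradR (θhat k) (k * h)) :
    limsup (fun k : ℕ => ‖θhat k - θstar (k * h)‖) atTop ≤ L * h / (η * M) :=
  stmt_0_general gradR θstar h η M L hh hη hM hηM hopt hLip hcontr θhat hupd
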